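/- For any two reals r₁, r₂ with 1/√2 ≤ r₁ < r₂ ≤ 1, the maximum of A(r₁,x) over x ∈ [0,1/2] is strictly smaller than the maximum of A(r₂,x) over x ∈ [0,1/2]; in particular, for every r with √3/2 < r ≤ 1 one has max_{x∈[0,1/2]} A(r,x) > max_{x∈[0,1/2]} A(√3/2, x). -/

import Mathlib

/-! For every `x ∈ [0, 1/2]` and `r ≥ 1/2`, only the term `√(r² − x²)` of `A r x` depends on `r`,
and it is strictly increasing in `r`. The maximum of `A r₁` on the compact interval is attained at
some `x`, where `A r₂ x` is already larger. -/

open Set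

/-- `A r x = (1/2)·x·√(3 − 4x − 4x²) + (1/2)·√(r² − x²)`. -/
noncomputable def A (r x : ℝ) : ℝ :=
  1 / 2 * x * Real.sqrt (3 - 4 * x - 4 * x ^ 2) + 1 / 2 * Real.sqrt (r ^ 2 - x ^ 2)

theorem IsCompact.sSup_image_lt_sSup_image {α β : Type*} [ConditionallyCompleteLinearOrder α]
    [TopologicalSpace α] [ClosedIciTopology α] [TopologicalSpace β] {f g : β → α} {K : Set β}
    (hK : IsCompact K) (h0K : K.Nonempty) (hf : ContinuousOn f K) (hg : ContinuousOn g K)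
    (hfg : ∀ x ∈ K, f x < g x) : sSup (f '' K) < sSup (g '' K) :=
  (hK.sSup_lt_iff_of_continuous h0K hf _).2 fun x hx =>
    (hfg x hx).trans_le (le_csSup (hK.bddAbove_image hg) (mem_image_of_mem g hx))

theorem continuous_A (r : ℝ) : Continuous (A r) := by
  unfold A
  fun_prop

theorem A_lt_A_of_lt {r₁ r₂ x : ℝ} (hx : |x| ≤ r₁) (hr : r₁ < r₂) : A r₁ x < A r₂ x := by
  have hx2 : x ^ 2 ≤ r₁ ^ 2 := sq_le_sq' (abs_le.1 hx).1 (abs_le.1 hx).2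
  have hr0 : 0 ≤ r₁ := (abs_nonneg x).trans hx
  have hsqrt : √(r₁ ^ 2 - x ^ 2) < √(r₂ ^ 2 - x ^ 2) :=
    Real.sqrt_lt_sqrt (by linarith) (by nlinarith)
  unfold A
  linarith

theorem sSup_A_image_lt {r₁ r₂ : ℝ} (h₁ : 1 / 2 ≤ r₁) (hr : r₁ < r₂) :
    sSup (A r₁ '' Icc (0 : ℝ) (1 / 2)) < sSup (A r₂ '' Icc (0 : ℝ) (1 / 2)) :=
  isCompact_Icc.sSup_image_lt_sSup_image (nonempty_Icc.2 (by norm_num))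
    (continuous_A r₁).continuousOn (continuous_A r₂).continuousOn fun x hx => A_lt_A_of_lt
      ((abs_of_nonneg hx.1).trans_le hx.2 |>.trans h₁) hr

theorem stmt_10 :
    (∀ r₁ r₂ : ℝ, (Real.sqrt 2)⁻¹ ≤ r₁ → r₁ < r₂ → r₂ ≤ 1 →
      sSup (A r₁ '' Set.Icc (0 : ℝ) (1 / 2)) <
        sSup (A r₂ '' Set.Icc (0 : ℝ) (1 / 2))) ∧
    (∀ r : ℝ, Real.sqrt 3 / 2 < r → r ≤ 1 →
      sSup (A (Real.sqrt 3 / 2) '' Set.Icc (0 : ℝ) (1 / 2)) <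
        sSup (A r '' Set.Icc (0 : ℝ) (1 / 2))) := by
  have hsqrt2 : 1 / 2 ≤ (√2)⁻¹ := by
    rw [one_div]
    gcongr
    exact (Real.sqrt_le_left (by norm_num)).2 (by norm_num)
  have hsqrt3 : 1 / 2 ≤ √3 / 2 := by
    gcongr
    exact Real.one_le_sqrt.2 (by norm_num)
  exact ⟨fun r₁ r₂ h₁ hr _ => sSup_A_image_lt (hsqrt2.trans h₁) hr,
    fun r hr _ => sSup_A_image_lt hsqrt3 hr⟩
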